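/- arXiv:1806.09725 — 2 statements merged into one kernel-verified Lean document; each statement's English description precedes it below -/
import Mathlib

section
/- Let M be symmetric with σ(M) ⊂ (0, μ) for μ ∈ (1,2], Z := (μ−1)(μI − M)^{-1}, and suppose λ̃ is a number satisfying |λ_max(Z) − λ̃| ≤ 0.4·λ_max(Z). If λ̃ < 1, then λ_max(Z) < 2 and consequently λ_max(M) < (1+μ)/2. -/
/-!
Every eigenvector of `M`, with eigenvalue `λ`, is an eigenvector of `Z` with eigenvalue
`(μ - 1) / (μ - λ)`, which is therefore at most `λ_max(Z)`. From `λ_max(Z) - λ̃ ≤ 0.4 λ_max(Z)`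
and `λ̃ < 1` we get `λ_max(Z) < 5/3 < 2`, and `(μ - 1) / (μ - λ) < 2` rearranges to
`λ < (1 + μ) / 2`.
-/

namespace Matrix

variable {n : Type*} [Fintype n] [DecidableEq n]

theorem mem_spectrum_of_mulVec_eq_smul {R : Type*} [CommRing R] {A : Matrix n n R}
    {v : n → R} {t : R} (hv : v ≠ 0) (h : A *ᵥ v = t • v) : t ∈ spectrum R A := by
  rw [← spectrum_toLin']
  exact Module.End.HasEigenvalue.mem_spectrum
    (Module.End.hasEigenvalue_of_hasEigenvector ⟨Module.End.mem_eigenspace_iff.mpr h, hv⟩)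

theorem inv_mulVec_eq_of_mulVec_eq_smul {K : Type*} [Field K] {A : Matrix n n K}
    {v : n → K} {t : K} (hA : IsUnit A.det) (ht : t ≠ 0) (h : A *ᵥ v = t • v) :
    A⁻¹ *ᵥ v = t⁻¹ • v := by
  calc A⁻¹ *ᵥ v = A⁻¹ *ᵥ (t⁻¹ • A *ᵥ v) := by rw [h, smul_smul, inv_mul_cancel₀ ht, one_smul]
    _ = t⁻¹ • v := by rw [mulVec_smul, mulVec_mulVec, nonsing_inv_mul A hA, one_mulVec]

theorem IsHermitian.isUnit_det_smul_one_sub {𝕜 : Type*} [RCLike 𝕜] {A : Matrix n n 𝕜}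
    (hA : A.IsHermitian) {μ : ℝ} (hμ : ∀ i, hA.eigenvalues i ≠ μ) :
    IsUnit (μ • (1 : Matrix n n 𝕜) - A).det := by
  have : μ ∉ spectrum ℝ A := by
    rw [hA.spectrum_real_eq_range_eigenvalues]
    rintro ⟨i, hi⟩
    exact hμ i hi
  rw [spectrum.mem_iff, not_not, Algebra.algebraMap_eq_smul_one] at this
  exact (isUnit_iff_isUnit_det _).mp this

theorem IsHermitian.mul_inv_sub_eigenvalues_mem_spectrum {M : Matrix n n ℝ} (hM : M.IsHermitian)
    {μ : ℝ} (hμ : ∀ i, hM.eigenvalues i ≠ μ) (c : ℝ) (j : n) :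
    c * (μ - hM.eigenvalues j)⁻¹ ∈ spectrum ℝ (c • (μ • (1 : Matrix n n ℝ) - M)⁻¹) := by
  set v := ⇑(hM.eigenvectorBasis j)
  have hv : v ≠ 0 := fun h0 =>
    hM.eigenvectorBasis.orthonormal.ne_zero j (WithLp.ofLp_injective 2 h0)
  have hsub : μ - hM.eigenvalues j ≠ 0 := sub_ne_zero.mpr (hμ j).symm
  have hAv : (μ • (1 : Matrix n n ℝ) - M) *ᵥ v = (μ - hM.eigenvalues j) • v := by
    rw [sub_mulVec, smul_mulVec, one_mulVec, hM.mulVec_eigenvectorBasis, sub_smul]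
  refine mem_spectrum_of_mulVec_eq_smul hv ?_
  rw [smul_mulVec, inv_mulVec_eq_of_mulVec_eq_smul (hM.isUnit_det_smul_one_sub hμ) hsub hAv,
    smul_smul]

end Matrix

theorem stmt5_general {N : ℕ} (M : Matrix (Fin N) (Fin N) ℝ) (hM : M.IsHermitian)
    (μ : ℝ)
    (hspec : ∀ i, hM.eigenvalues i ∈ Set.Ioo 0 μ)
    (Z : Matrix (Fin N) (Fin N) ℝ)
    (hZ : Z = (μ - 1) • (μ • (1 : Matrix (Fin N) (Fin N) ℝ) - M)⁻¹)
    (hZH : Z.IsHermitian)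
    (L : ℝ) (hL : IsGreatest (Set.range hZH.eigenvalues) L)
    (lam : ℝ) (hlam : |L - lam| ≤ 0.4 * L)
    (hlt : lam < 1) :
    L < 2 ∧ ∀ j, hM.eigenvalues j < (1 + μ) / 2 := by
  have hL2 : L < 2 := by linarith [(abs_sub_le_iff.mp hlam).1]
  refine ⟨hL2, fun j => ?_⟩
  have hgap : 0 < μ - hM.eigenvalues j := sub_pos.mpr (hspec j).2
  have hmem : (μ - 1) * (μ - hM.eigenvalues j)⁻¹ ∈ Set.range hZH.eigenvalues := by
    rw [← hZH.spectrum_real_eq_range_eigenvalues, hZ]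
    exact hM.mul_inv_sub_eigenvalues_mem_spectrum (fun i => ((hspec i).2).ne) _ j
  have hlt2 : (μ - 1) * (μ - hM.eigenvalues j)⁻¹ < 2 := (hL.2 hmem).trans_lt hL2
  rw [mul_inv_lt_iff₀ hgap] at hlt2
  linarith

/-- `M` symmetric with spectrum in `(0,μ)`, `μ ∈ (1,2]`,
`Z := (μ−1)•(μ•I−M)⁻¹`, `λ̃` with `|λ_max(Z) − λ̃| ≤ 0.4·λ_max(Z)`.
If `λ̃ < 1` then `λ_max(Z) < 2` and `λ_max(M) < (1+μ)/2`. -/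
theorem stmt5 {N : ℕ} (M : Matrix (Fin N) (Fin N) ℝ) (hM : M.IsHermitian)
    (μ : ℝ) (hμ : 1 < μ ∧ μ ≤ 2)
    (hspec : ∀ i, hM.eigenvalues i ∈ Set.Ioo 0 μ)
    (Z : Matrix (Fin N) (Fin N) ℝ)
    (hZ : Z = (μ - 1) • (μ • (1 : Matrix (Fin N) (Fin N) ℝ) - M)⁻¹)
    (hZH : Z.IsHermitian)
    (L : ℝ) (hL : IsGreatest (Set.range hZH.eigenvalues) L)
    (lam : ℝ) (hlam : |L - lam| ≤ 0.4 * L)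
    (hlt : lam < 1) :
    L < 2 ∧ ∀ j, hM.eigenvalues j < (1 + μ) / 2 :=
  stmt5_general M hM μ hspec Z hZ hZH L hL lam hlam hlt
end

section
/- Let A be a regular real symmetric matrix with all eigenvalues having absolute value in (μ̌, μ̂), and M := I − (1/μ̂)·A. Then A is positive definite if and only if λ_max(M) ≤ 1 − μ̌/μ̂; and A fails to be positive definite if and only if λ_max(M) ≥ 1 + μ̌/μ̂. -/
/-!
The eigenvalues of `M = I - A/μ̂` are the numbers `1 - λ/μ̂`, `λ` running over the eigenvalues of
`A`. Since no eigenvalue of `A` lies in `[-μ̌, μ̌]`, either all of them exceed `μ̌` (exactly when `A`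
is positive definite) and then every eigenvalue of `M` is below `1 - μ̌/μ̂`, or one of them is below
`-μ̌` and then `M` has an eigenvalue above `1 + μ̌/μ̂`. The gap between these two thresholds turns
both implications into equivalences.
-/

open Matrix Set Pointwise

theorem spectrum.one_sub_smul_eq_image {𝕜 A : Type*} [Field 𝕜] [Ring A] [Algebra 𝕜 A]
    (a : A) {c : 𝕜} (hc : c ≠ 0) :
    spectrum 𝕜 (1 - c • a) = (fun t => 1 - c * t) '' spectrum 𝕜 a := by
  rw [← map_one (algebraMap 𝕜 A), ← spectrum.singleton_sub_eq,
    show c • a = (Units.mk0 c hc) • a from rfl, spectrum.unit_smul_eq_smul,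
    Set.singleton_sub, Units.smul_def, ← Set.image_smul, Set.image_image]
  rfl

theorem Matrix.IsHermitian.range_eigenvalues_one_sub_smul {n : Type*} [Fintype n]
    [DecidableEq n] {A : Matrix n n ℝ} (hA : A.IsHermitian) {c : ℝ} (hc : c ≠ 0)
    (hM : (1 - c • A).IsHermitian) :
    range hM.eigenvalues = (fun t => 1 - c * t) '' range hA.eigenvalues := by
  rw [← hM.spectrum_real_eq_range_eigenvalues, ← hA.spectrum_real_eq_range_eigenvalues,
    spectrum.one_sub_smul_eq_image A hc]

section SpectralGap

variable {S : Set ℝ} {μlo μhi L : ℝ}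

theorem lt_one_sub_div_of_isGreatest_of_forall_pos (hhi : 0 < μhi)
    (hS : S ⊆ Ioo μlo μhi ∪ Ioo (-μhi) (-μlo))
    (hL : IsGreatest ((fun t => 1 - μhi⁻¹ * t) '' S) L) (hpos : ∀ t ∈ S, 0 < t) :
    L < 1 - μlo / μhi := by
  obtain ⟨t, ht, rfl⟩ := hL.1
  have hlo_lt : μlo < t := by
    rcases hS ht with h | h
    · exact h.1
    · linarith [hpos t ht, h.1, h.2]
  rw [div_eq_inv_mul]
  linarith [mul_lt_mul_of_pos_left hlo_lt (inv_pos.2 hhi)]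

theorem one_add_div_lt_of_isGreatest_of_exists_nonpos (hlo : 0 < μlo) (hhi : 0 < μhi)
    (hS : S ⊆ Ioo μlo μhi ∪ Ioo (-μhi) (-μlo))
    (hL : IsGreatest ((fun t => 1 - μhi⁻¹ * t) '' S) L) (hnonpos : ∃ t ∈ S, t ≤ 0) :
    1 + μlo / μhi < L := by
  obtain ⟨t, ht, ht0⟩ := hnonpos
  have hlt_neg : t < -μlo := by
    rcases hS ht with h | h
    · linarith [h.1]
    · exact h.2
  calc 1 + μlo / μhi < 1 - μhi⁻¹ * t := by
        rw [div_eq_inv_mul]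
        linarith [mul_lt_mul_of_pos_left hlt_neg (inv_pos.2 hhi)]
    _ ≤ L := hL.2 ⟨t, ht, rfl⟩

theorem forall_pos_iff_of_isGreatest_image (hlo : 0 < μlo) (hlt : μlo < μhi)
    (hS : S ⊆ Ioo μlo μhi ∪ Ioo (-μhi) (-μlo))
    (hL : IsGreatest ((fun t => 1 - μhi⁻¹ * t) '' S) L) :
    ((∀ t ∈ S, 0 < t) ↔ L ≤ 1 - μlo / μhi) ∧ (¬(∀ t ∈ S, 0 < t) ↔ 1 + μlo / μhi ≤ L) := by
  have hhi : 0 < μhi := hlo.trans hlt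
  have hgap : 1 - μlo / μhi < 1 + μlo / μhi := by linarith [div_pos hlo hhi]
  by_cases hpos : ∀ t ∈ S, 0 < t
  · have hL_lt := lt_one_sub_div_of_isGreatest_of_forall_pos hhi hS hL hpos
    exact ⟨iff_of_true hpos hL_lt.le, iff_of_false (not_not.2 hpos) (by linarith)⟩
  · have hnonpos : ∃ t ∈ S, t ≤ 0 := by simpa using hpos
    have hlt_L := one_add_div_lt_of_isGreatest_of_exists_nonpos hlo hhi hS hL hnonpos
    exact ⟨iff_of_false hpos (by linarith), iff_of_true hpos hlt_L.le⟩

end SpectralGap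

theorem stmt10_general {N : ℕ} (A : Matrix (Fin N) (Fin N) ℝ) (hA : A.IsHermitian)
    (μlo μhi : ℝ) (hlo : 0 < μlo) (hlt : μlo < μhi)
    (hspec : ∀ i, hA.eigenvalues i ∈ Set.Ioo μlo μhi ∪ Set.Ioo (-μhi) (-μlo))
    (M : Matrix (Fin N) (Fin N) ℝ)
    (hMdef : M = 1 - μhi⁻¹ • A) (hM : M.IsHermitian)
    (L : ℝ) (hL : IsGreatest (Set.range hM.eigenvalues) L) :
    (A.PosDef ↔ L ≤ 1 - μlo / μhi) ∧ (¬A.PosDef ↔ 1 + μlo / μhi ≤ L) := by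
  subst hMdef
  rw [hA.range_eigenvalues_one_sub_smul (inv_ne_zero (hlo.trans hlt).ne') hM] at hL
  have h := forall_pos_iff_of_isGreatest_image hlo hlt (range_subset_iff.2 hspec) hL
  rwa [forall_mem_range, ← hA.posDef_iff_eigenvalues_pos] at h

/-- `A` symmetric invertible with all eigenvalues of absolute
value in `(μ̌, μ̂)`, `M := I − A/μ̂`. Then `A` is positive definite iff
`λ_max(M) ≤ 1 − μ̌/μ̂`, and `A` is not positive definite iff `λ_max(M) ≥ 1 + μ̌/μ̂`. -/
theorem stmt10 {N : ℕ} (A : Matrix (Fin N) (Fin N) ℝ) (hA : A.IsHermitian)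
    (hreg : IsUnit A.det)
    (μlo μhi : ℝ) (hlo : 0 < μlo) (hlt : μlo < μhi)
    (hspec : ∀ i, hA.eigenvalues i ∈ Set.Ioo μlo μhi ∪ Set.Ioo (-μhi) (-μlo))
    (M : Matrix (Fin N) (Fin N) ℝ)
    (hMdef : M = 1 - μhi⁻¹ • A) (hM : M.IsHermitian)
    (L : ℝ) (hL : IsGreatest (Set.range hM.eigenvalues) L) :
    (A.PosDef ↔ L ≤ 1 - μlo / μhi) ∧ (¬A.PosDef ↔ 1 + μlo / μhi ≤ L) :=
  stmt10_general A hA μlo μhi hlo hlt hspec M hMdef hM L hL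
end
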